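/- Let H and A be linearly ordered abelian groups, K a field, σ : A → Kˣ a homomorphism, and β : H × H → A a normalized symmetric 2-cocycle. Let φ̄ be a field automorphism of K, φ₁ : A → A a group homomorphism, and φ₂ : H → H an order-preserving group automorphism, such that φ₁(−β(h,h')) = −β(φ₂(h), φ₂(h')) for all h, h' ∈ H and φ̄(σ(a)) = σ(φ₁(a)) for all a ∈ A. Then the map Φ on the twisted Hahn series field K(t^H,β) defined by Φ(Σ_h a_h t^h) = Σ_h φ̄(a_h) t^{φ₂(h)} (i.e. (Φ a).coeff(φ₂(h)) = φ̄(a.coeff h)) is a ring automorphism: it is bijective, additive, and satisfies Φ(a ⋆ b) = Φ(a) ⋆ Φ(b). -/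

import Mathlib

/-!
The lift `Φ` of `(φK, e)` is inverted by the lift of `(φK⁻¹, e⁻¹)`, and it is coefficientwise
additive. For multiplicativity, `e × e` maps the pairs `(h, h')` with `h + h' = l` in the supports
of `a, b` bijectively onto the pairs summing to `e l` in the supports of `Φ a, Φ b`; on matching
terms the two compatibility conditions turn `φK (σ (-β h h'))` into `σ (-β (e h) (e h'))`.
-/

/-- Twisted multiplication on Hahn series. -/
noncomputable def tmul {K H A : Type*} [Field K]
    [AddCommGroup H] [LinearOrder H] [IsOrderedAddMonoid H] [AddCommGroup A]
    (σ : A → Kˣ) (β : H → H → A) (x y : HahnSeries H K) : HahnSeries H K where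
  coeff l := ∑ ij ∈ Finset.addAntidiagonal x.isPWO_support y.isPWO_support l,
      x.coeff ij.1 * y.coeff ij.2 * (σ (-β ij.1 ij.2) : K)
  isPWO_support' := by
    refine Set.IsPWO.mono (x.isPWO_support.add y.isPWO_support) ?_
    intro l hl
    obtain ⟨ij, hij, -⟩ :=
      Finset.exists_ne_zero_of_sum_ne_zero (Function.mem_support.mp hl)
    replace hij := Finset.mem_addAntidiagonal.mp hij
    exact Set.mem_add.mpr ⟨ij.1, hij.1, ij.2, hij.2.1, hij.2.2⟩

/-- The lift `Φ (∑ a_h t^h) = ∑ φK (a_h) t^{e h}` of a field automorphism `φK`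
and an order-preserving group automorphism `e` to Hahn series, i.e.
`(Φ a).coeff l = φK (a.coeff (e⁻¹ l))`. -/
noncomputable def tmap {K H : Type*} [Field K] [AddCommGroup H] [LinearOrder H] [IsOrderedAddMonoid H]
    (φK : K ≃+* K) (e : H ≃+ H) (he : Monotone ⇑e) (a : HahnSeries H K) :
    HahnSeries H K where
  coeff l := φK (a.coeff (e.symm l))
  isPWO_support' := by
    refine Set.IsPWO.mono ((a.isPWO_support.image_of_monotone he)) ?_
    intro l hl
    refine ⟨e.symm l, ?_, by simp⟩
    intro h0
    exact Function.mem_support.mp hl (by rw [h0, map_zero])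

theorem Equiv.monotone_symm_of_monotone {α β : Type*} [LinearOrder α] [PartialOrder β]
    (e : α ≃ β) (he : Monotone e) : Monotone e.symm := fun x y hxy =>
  (he.strictMono_of_injective e.injective).le_iff_le.mp (by simpa using hxy)

section tmap

variable {K H : Type*} [Field K] [AddCommGroup H] [LinearOrder H] [IsOrderedAddMonoid H]
  (φK : K ≃+* K) (e : H ≃+ H) (he : Monotone e)

theorem tmap_coeff_apply (a : HahnSeries H K) (h : H) :
    (tmap φK e he a).coeff (e h) = φK (a.coeff h) := by
  simp [tmap]

theorem tmap_symm_tmap (a : HahnSeries H K) :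
    tmap φK.symm e.symm (e.toEquiv.monotone_symm_of_monotone he) (tmap φK e he a) = a := by
  ext l
  simp [tmap]

theorem tmap_tmap_symm (a : HahnSeries H K) :
    tmap φK e he (tmap φK.symm e.symm (e.toEquiv.monotone_symm_of_monotone he) a) = a := by
  ext l
  simp [tmap]

theorem tmap_bijective : Function.Bijective (tmap φK e he) :=
  Function.bijective_iff_has_inverse.mpr
    ⟨_, tmap_symm_tmap φK e he, tmap_tmap_symm φK e he⟩

theorem tmap_add (a b : HahnSeries H K) :
    tmap φK e he (a + b) = tmap φK e he a + tmap φK e he b := by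
  ext l
  simp [tmap]

theorem support_tmap (a : HahnSeries H K) : (tmap φK e he a).support = e.symm ⁻¹' a.support := by
  ext l
  simp [tmap]

theorem addAntidiagonal_tmap (a b : HahnSeries H K) (l : H) :
    Finset.addAntidiagonal (tmap φK e he a).isPWO_support (tmap φK e he b).isPWO_support (e l) =
      (Finset.addAntidiagonal a.isPWO_support b.isPWO_support l).map
        (e.toEquiv.prodCongr e.toEquiv).toEmbedding := by
  ext ⟨i, j⟩
  obtain ⟨i, rfl⟩ := e.surjective i
  obtain ⟨j, rfl⟩ := e.surjective j
  simp only [Finset.mem_map_equiv, Finset.addAntidiagonal, Finset.mem_antidiagonal, support_tmap]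
  simp [← map_add]

theorem tmap_tmul {A : Type*} [AddCommGroup A] (σ : A → Kˣ) (β : H → H → A) (φ₁ : A →+ A)
    (hφβ : ∀ h h' : H, φ₁ (-(β h h')) = -(β (e h) (e h')))
    (hφσ : ∀ a : A, φK ((σ a : K)) = ((σ (φ₁ a) : K))) (a b : HahnSeries H K) :
    tmap φK e he (tmul σ β a b) = tmul σ β (tmap φK e he a) (tmap φK e he b) := by
  ext l
  obtain ⟨l, rfl⟩ := e.surjective l
  rw [tmap_coeff_apply]
  simp only [tmul, addAntidiagonal_tmap, Finset.sum_map, map_sum, map_mul]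
  refine Finset.sum_congr rfl fun ij _ => ?_
  simp [tmap_coeff_apply, hφσ, hφβ]

end tmap

theorem twisted_hahn_series_lift_automorphism_general
    {K H A : Type*} [Field K]
    [AddCommGroup H] [LinearOrder H] [IsOrderedAddMonoid H]
    [AddCommGroup A]
    (σ : A → Kˣ)
    (β : H → H → A)
    (φK : K ≃+* K) (φ₁ : A →+ A) (e : H ≃+ H) (he : Monotone ⇑e)
    (hφβ : ∀ h h' : H, φ₁ (-(β h h')) = -(β (e h) (e h')))
    (hφσ : ∀ a : A, φK ((σ a : K)) = ((σ (φ₁ a) : K))) :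
    (∀ (a : HahnSeries H K) (h : H), (tmap φK e he a).coeff (e h) = φK (a.coeff h)) ∧
    Function.Bijective (tmap φK e he) ∧
    (∀ a b : HahnSeries H K, tmap φK e he (a + b) = tmap φK e he a + tmap φK e he b) ∧
    (∀ a b : HahnSeries H K,
      tmap φK e he (tmul σ β a b) = tmul σ β (tmap φK e he a) (tmap φK e he b)) :=
  ⟨tmap_coeff_apply φK e he, tmap_bijective φK e he, tmap_add φK e he,
    tmap_tmul φK e he σ β φ₁ hφβ hφσ⟩

/-- STATEMENT 13: Let `β : H × H → A` be a normalized symmetric 2-cocycle and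
`σ : A → Kˣ` a homomorphism. If `φK` is a field automorphism of `K`,
`φ₁ : A → A` a group homomorphism and `e : H → H` an order-preserving group
automorphism such that `φ₁ (-β h h') = -β (e h) (e h')` and
`φK (σ a) = σ (φ₁ a)`, then the lift `Φ (∑ a_h t^h) = ∑ φK (a_h) t^{e h}` is a
ring automorphism of the twisted Hahn series field `K(t^H,β)`: it is bijective,
additive, and multiplicative for the twisted multiplication. -/
theorem twisted_hahn_series_lift_automorphism
    {K H A : Type*} [Field K]
    [AddCommGroup H] [LinearOrder H] [IsOrderedAddMonoid H]
    [AddCommGroup A] [LinearOrder A] [IsOrderedAddMonoid A]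
    (σ : A → Kˣ) (hσ : ∀ a a' : A, σ (a + a') = σ a * σ a')
    (β : H → H → A)
    (hβsymm : ∀ h h' : H, β h h' = β h' h)
    (hβnorm : ∀ h : H, β h 0 = 0 ∧ β 0 h = 0)
    (hβcoc : ∀ h h' h'' : H, β h h' + β (h + h') h'' = β h' h'' + β h (h' + h''))
    (φK : K ≃+* K) (φ₁ : A →+ A) (e : H ≃+ H) (he : Monotone ⇑e)
    (hφβ : ∀ h h' : H, φ₁ (-(β h h')) = -(β (e h) (e h')))
    (hφσ : ∀ a : A, φK ((σ a : K)) = ((σ (φ₁ a) : K))) :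
    (∀ (a : HahnSeries H K) (h : H), (tmap φK e he a).coeff (e h) = φK (a.coeff h)) ∧
    Function.Bijective (tmap φK e he) ∧
    (∀ a b : HahnSeries H K, tmap φK e he (a + b) = tmap φK e he a + tmap φK e he b) ∧
    (∀ a b : HahnSeries H K,
      tmap φK e he (tmul σ β a b) = tmul σ β (tmap φK e he a) (tmap φK e he b)) :=
  twisted_hahn_series_lift_automorphism_general σ β φK φ₁ e he hφβ hφσ
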